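/- The restriction of the model map ℱ to J(ℱ) is continuous: with J(ℱ) carrying the subspace topology induced from τ_ℳ, the map J(ℱ) → J(ℱ), (t,s) ↦ (e^t − 1 − 2π|s₁|, σ(s)), is well defined and continuous. -/
import Mathlib


/-- The space of external addresses `(ℤ × {L,R})^ℕ`, with `L, R` encoded by
`false, true : Bool`. -/
def CSeq : Type := ℕ → ℤ × Bool

/-- The linear order on `ℤ × {L,R}`: `(n,*) < (m,⋆)` iff `* = ⋆ = R` and `n < m`,
or `* = ⋆ = L` and `m < n`, or `* = L` and `⋆ = R`. -/
def symbLt : ℤ × Bool → ℤ × Bool → Prop := fun p q =>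
  (p.2 = true ∧ q.2 = true ∧ p.1 < q.1) ∨
    (p.2 = false ∧ q.2 = false ∧ q.1 < p.1) ∨
    (p.2 = false ∧ q.2 = true)

/-- The induced lexicographic order `<ₗ` on `(ℤ × {L,R})^ℕ`. -/
def lexLt (s t : CSeq) : Prop :=
  ∃ n : ℕ, (∀ k < n, s k = t k) ∧ symbLt (s n) (t n)

/-- The cyclic order `[s, a, t]` induced by `<ₗ`. -/
def cycBtw (s a t : CSeq) : Prop :=
  (lexLt s a ∧ lexLt a t) ∨ (lexLt a t ∧ lexLt t s) ∨ (lexLt t s ∧ lexLt s a)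

/-- The open interval `(s, t)` of the cyclic order. -/
def cycInterval (s t : CSeq) : Set CSeq := {x | cycBtw s x t}

/-- The cyclic order topology on `(ℤ × {L,R})^ℕ`, generated by the open
intervals of the cyclic order. -/
instance : TopologicalSpace CSeq :=
  TopologicalSpace.generateFrom {I | ∃ s t : CSeq, I = cycInterval s t}

/-- The model map `ℱ(t,s) = (e^t − 1 − 2π|s₁|, σ(s))`, where `σ` is the one-sided
shift and `|s₁|` is the absolute value of the integer part of the second entry
of `s`. -/
noncomputable def modelF : ℝ × CSeq → ℝ × CSeq := fun p =>
  (Real.exp p.1 - 1 - 2 * Real.pi * |(((p.2 1).1 : ℤ) : ℝ)|, fun n => p.2 (n + 1))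

/-- The model Julia set `J(ℱ) = {x ∈ ℳ : T(ℱⁿ(x)) ≥ 0 for all n ≥ 0}` (the
condition for `n = 0` says exactly that the first coordinate lies in `[0,∞)`). -/
def modelJ : Set (ℝ × CSeq) := {p | ∀ n : ℕ, 0 ≤ (modelF^[n] p).1}

namespace ModelAux

def sPred (p : ℤ × Bool) : ℤ × Bool := if p.2 then (0, false) else (p.1 + 1, false)
def sSucc (p : ℤ × Bool) : ℤ × Bool := if p.2 then (p.1 + 1, true) else (0, true)

lemma sPred_lt (p : ℤ × Bool) : symbLt (sPred p) p := by
  rcases p with ⟨n, b⟩; cases b <;> simp [sPred, symbLt]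

lemma lt_sSucc (p : ℤ × Bool) : symbLt p (sSucc p) := by
  rcases p with ⟨n, b⟩; cases b <;> simp [sSucc, symbLt]

lemma not_succ_lt_pred (p q : ℤ × Bool) : ¬ symbLt (sSucc p) (sPred q) := by
  rcases p with ⟨n, b⟩; rcases q with ⟨m, c⟩
  cases b <;> cases c <;> simp [sSucc, sPred, symbLt]

lemma symbLt_irrefl (p : ℤ × Bool) : ¬ symbLt p p := by
  rcases p with ⟨n, b⟩; cases b <;> simp [symbLt]

lemma symbLt_asymm {p q : ℤ × Bool} (h1 : symbLt p q) (h2 : symbLt q p) : False := by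
  rcases p with ⟨n, b⟩; rcases q with ⟨m, c⟩
  cases b <;> cases c <;> simp [symbLt] at h1 h2 <;> omega

lemma symbLt_trans {p q r : ℤ × Bool} (h1 : symbLt p q) (h2 : symbLt q r) : symbLt p r := by
  rcases p with ⟨n, b⟩; rcases q with ⟨m, c⟩; rcases r with ⟨l, d⟩
  cases b <;> cases c <;> cases d <;> simp [symbLt] at h1 h2 ⊢ <;> omega

lemma symbLt_trichotomy (p q : ℤ × Bool) : p = q ∨ symbLt p q ∨ symbLt q p := by
  rcases p with ⟨n, b⟩; rcases q with ⟨m, c⟩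
  cases b <;> cases c <;> simp [symbLt, Prod.ext_iff] <;> omega

lemma lexLt_asymm {s t : CSeq} (h1 : lexLt s t) (h2 : lexLt t s) : False := by
  obtain ⟨n, hn, hns⟩ := h1; obtain ⟨m, hm, hms⟩ := h2
  rcases lt_trichotomy n m with h | h | h
  · rw [hm n h] at hns; exact symbLt_irrefl _ hns
  · subst h; exact symbLt_asymm hns hms
  · rw [hn m h] at hms; exact symbLt_irrefl _ hms

lemma lexLt_trans {a b c : CSeq} (h1 : lexLt a b) (h2 : lexLt b c) : lexLt a c := by
  obtain ⟨n, hn, hns⟩ := h1; obtain ⟨m, hm, hms⟩ := h2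
  rcases lt_trichotomy n m with h | h | h
  · exact ⟨n, fun k hk => (hn k hk).trans (hm k (hk.trans h)),
      by rw [hm n h] at hns; exact hns⟩
  · subst h; exact ⟨n, fun k hk => (hn k hk).trans (hm k hk), symbLt_trans hns hms⟩
  · exact ⟨m, fun k hk => (hn k (hk.trans h)).trans (hm k hk),
      by rw [← hn m h] at hms; exact hms⟩

lemma isOpen_cycInterval (s t : CSeq) : IsOpen (cycInterval s t) :=
  TopologicalSpace.isOpen_generateFrom_of_mem ⟨s, t, rfl⟩

/-- Cylinder sets contain open neighborhoods. -/
lemma cylinder_open (x : CSeq) (N : ℕ) :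
    ∃ V : Set CSeq, IsOpen V ∧ x ∈ V ∧ ∀ y ∈ V, ∀ k ≤ N, y k = x k := by
  classical
  set a : CSeq := fun k => if k = N + 1 then sPred (x (N + 1)) else x k with ha
  set b : CSeq := fun k => if k = N + 1 then sSucc (x (N + 1)) else x k with hb
  have hax : lexLt a x :=
    ⟨N + 1, fun k hk => by simp [ha, Nat.ne_of_lt hk], by simp [ha, sPred_lt]⟩
  have hxb : lexLt x b :=
    ⟨N + 1, fun k hk => by simp [hb, Nat.ne_of_lt hk], by simp [hb, lt_sSucc]⟩
  have hnba : ¬ lexLt b a := by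
    rintro ⟨m, hm, hms⟩
    by_cases h : m = N + 1
    · subst h; simp [ha, hb] at hms; exact not_succ_lt_pred _ _ hms
    · have : b m = a m := by simp [ha, hb, h]
      rw [this] at hms; exact symbLt_irrefl _ hms
  refine ⟨cycInterval a b, isOpen_cycInterval a b, Or.inl ⟨hax, hxb⟩, ?_⟩
  intro y hy
  rcases hy with ⟨h1, h2⟩ | ⟨h1, h2⟩ | ⟨h1, h2⟩
  · intro k
    induction k using Nat.strong_induction_on with
    | _ k ih =>
      intro hk
      rcases symbLt_trichotomy (y k) (x k) with h | h | h
      · exact h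
      · exfalso
        refine lexLt_asymm h1 ⟨k, fun j hj => ?_, ?_⟩
        · have := ih j hj (hj.le.trans hk)
          simp [ha, show j ≠ N + 1 by omega, this]
        · simpa [ha, show k ≠ N + 1 by omega] using h
      · exfalso
        refine lexLt_asymm h2 ⟨k, fun j hj => ?_, ?_⟩
        · have := ih j hj (hj.le.trans hk)
          simp [hb, show j ≠ N + 1 by omega, this]
        · simpa [hb, show k ≠ N + 1 by omega] using h
  · exact absurd h2 hnba
  · exact absurd h1 hnba

def cseqTail (s : CSeq) : CSeq := fun n => s (n + 1)

def cseqCons (c : ℤ × Bool) (s : CSeq) : CSeq := fun n =>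
  match n with
  | 0 => c
  | Nat.succ m => s m

lemma cons_tail (y : CSeq) : cseqCons (y 0) (cseqTail y) = y := by
  funext n; cases n <;> rfl

lemma cons_lexLt_cons {c : ℤ × Bool} {u v : CSeq} :
    lexLt (cseqCons c u) (cseqCons c v) ↔ lexLt u v := by
  constructor
  · rintro ⟨n, hn, hns⟩
    cases n with
    | zero => exact absurd hns (symbLt_irrefl _)
    | succ m => exact ⟨m, fun k hk => hn (k + 1) (by omega), hns⟩
  · rintro ⟨n, hn, hns⟩
    refine ⟨n + 1, fun k hk => ?_, hns⟩
    cases k with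
    | zero => rfl
    | succ m => exact hn m (by omega)

lemma btw_iff_of_lt {A B y : CSeq} (h : lexLt A B) :
    cycBtw A y B ↔ lexLt A y ∧ lexLt y B := by
  constructor
  · rintro (⟨h1, h2⟩ | ⟨h1, h2⟩ | ⟨h1, h2⟩)
    · exact ⟨h1, h2⟩
    · exact (lexLt_asymm h h2).elim
    · exact (lexLt_asymm h h1).elim
  · exact fun h' => Or.inl h'

lemma head_eq {c : ℤ × Bool} {u v y : CSeq}
    (h1 : lexLt (cseqCons c u) y) (h2 : lexLt y (cseqCons c v)) : y 0 = c := by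
  rcases symbLt_trichotomy (y 0) c with h | h | h
  · exact h
  · exact (lexLt_asymm h1 ⟨0, fun k hk => absurd hk (Nat.not_lt_zero k), h⟩).elim
  · exact (lexLt_asymm h2 ⟨0, fun k hk => absurd hk (Nat.not_lt_zero k), h⟩).elim

lemma tail_continuous : Continuous cseqTail := by
  apply continuous_generateFrom_iff.mpr
  rintro S ⟨s, t, rfl⟩
  rw [isOpen_iff_forall_mem_open]
  intro x hx
  set α := cseqTail x with hα
  have key : ∀ u v : CSeq, lexLt u α → lexLt α v →
      (∀ z : CSeq, lexLt u z → lexLt z v → cycBtw s z t) →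
      ∃ V ⊆ cseqTail ⁻¹' cycInterval s t, IsOpen V ∧ x ∈ V := by
    intro u v huα hαv himp
    have huv : lexLt u v := lexLt_trans huα hαv
    have hAB : lexLt (cseqCons (x 0) u) (cseqCons (x 0) v) := cons_lexLt_cons.mpr huv
    refine ⟨cycInterval (cseqCons (x 0) u) (cseqCons (x 0) v), ?_,
      isOpen_cycInterval _ _, ?_⟩
    · intro y hy
      obtain ⟨h1, h2⟩ := (btw_iff_of_lt hAB).mp hy
      have h0 : y 0 = x 0 := head_eq h1 h2
      have hy' : cseqCons (x 0) (cseqTail y) = y := by rw [← h0, cons_tail]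
      rw [← hy'] at h1 h2
      exact himp _ (cons_lexLt_cons.mp h1) (cons_lexLt_cons.mp h2)
    · have hx' : cseqCons (x 0) α = x := by rw [hα, cons_tail]
      exact Or.inl ⟨by rw [← hx']; exact cons_lexLt_cons.mpr huα,
        by rw [← hx']; exact cons_lexLt_cons.mpr hαv⟩
  classical
  rcases hx with ⟨h1, h2⟩ | ⟨h1, h2⟩ | ⟨h1, h2⟩
  · exact key s t h1 h2 (fun z hz1 hz2 => Or.inl ⟨hz1, hz2⟩)
  · have hw : lexLt (fun n => if n = 0 then sPred (α 0) else α n) α :=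
      ⟨0, fun k hk => absurd hk (Nat.not_lt_zero k), by simp [sPred_lt]⟩
    exact key _ t hw h1 (fun z _ hz2 => Or.inr (Or.inl ⟨hz2, h2⟩))
  · have hw : lexLt α (fun n => if n = 0 then sSucc (α 0) else α n) :=
      ⟨0, fun k hk => absurd hk (Nat.not_lt_zero k), by simp [lt_sSucc]⟩
    exact key s _ h2 hw (fun z hz1 _ => Or.inr (Or.inr ⟨h1, hz1⟩))

lemma cont_abs : Continuous (fun s : CSeq => |(((s 1).1 : ℤ) : ℝ)|) := by
  apply IsLocallyConstant.continuous
  rw [IsLocallyConstant.iff_exists_open]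
  intro x
  obtain ⟨V, hV, hxV, hVc⟩ := cylinder_open x 1
  exact ⟨V, hV, hxV, fun y hy => by rw [hVc y hy 1 le_rfl]⟩

end ModelAux

/-- The restriction of the model map `ℱ` to `J(ℱ)` is a
well-defined continuous self-map of `J(ℱ)` (with the subspace topology induced
from `τ_ℳ`). -/
theorem modelF_restriction_continuous :
    Set.MapsTo modelF modelJ modelJ ∧ ContinuousOn modelF modelJ := by
  constructor
  · intro p hp n
    have h := hp (n + 1)
    rwa [Function.iterate_succ_apply] at h
  · have hc : Continuous modelF :=
      (((Real.continuous_exp.comp continuous_fst).sub continuous_const).sub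
          (continuous_const.mul (ModelAux.cont_abs.comp continuous_snd))).prodMk
        (ModelAux.tail_continuous.comp continuous_snd)
    exact hc.continuousOn
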